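/- arXiv:2011.10730 — 4 statements merged into one kernel-verified Lean document; each statement's English description precedes it below -/
import Mathlib

section
/- Let m, n ≥ 1. Let u₁, …, u_{m+1} ∈ ℝᵐ, F₁, …, F_{m+1} ∈ ℝⁿ, and ε₁, …, ε_{m+1} ≥ 0. Suppose the m+1 vectors (uᵢᵀ, 1)ᵀ ∈ ℝ^{m+1}, i = 1, …, m+1, are linearly independent. Then the set { (A, b) ∈ ℝ^{n×m} × ℝⁿ : ‖A uᵢ + b − Fᵢ‖₂ ≤ εᵢ for all i = 1, …, m+1 } is bounded. -/
/-- The Euclidean norm on `Fin n → ℝ`. -/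
noncomputable def e2norm {n : ℕ} (v : Fin n → ℝ) : ℝ :=
  Real.sqrt (∑ j, v j ^ 2)

/-- Matrix–vector multiplication for an `n × m` real matrix represented as
`Fin n → Fin m → ℝ`. -/
def matVec {n m : ℕ} (A : Fin n → Fin m → ℝ) (v : Fin m → ℝ) : Fin n → ℝ :=
  fun j => ∑ k, A j k * v k

/-!
The map `(A, b) ↦ (A uᵢ + b)ᵢ` is linear and injective: the `j`-th row `(A_j, b_j)` of a kernel
element is orthogonal to every `(uᵢ, 1)`, and these span `ℝ^{m+1}`. An injective linear map out of
a finite-dimensional space is antilipschitz, so the preimage of the box `Fᵢ ± εᵢ` is bounded.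
-/

open Matrix

lemma abs_le_e2norm {n : ℕ} (v : Fin n → ℝ) (j : Fin n) : |v j| ≤ e2norm v := by
  rw [e2norm, ← Real.sqrt_sq_eq_abs]
  exact Real.sqrt_le_sqrt (Finset.single_le_sum (f := fun k => v k ^ 2)
    (fun k _ => sq_nonneg _) (Finset.mem_univ j))

lemma snoc_dotProduct_snoc {R : Type*} [CommSemiring R] {m : ℕ} (x y : Fin m → R) (a c : R) :
    (Fin.snoc x a : Fin (m + 1) → R) ⬝ᵥ Fin.snoc y c = x ⬝ᵥ y + a * c := by
  simp [dotProduct, Fin.sum_univ_castSucc]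

lemma matVec_add_eq_snoc_dotProduct {m n : ℕ} (A : Fin n → Fin m → ℝ) (b : Fin n → ℝ)
    (v : Fin m → ℝ) (j : Fin n) :
    matVec A v j + b j = (Fin.snoc (A j) (b j) : Fin (m + 1) → ℝ) ⬝ᵥ Fin.snoc v 1 := by
  rw [snoc_dotProduct_snoc, mul_one]
  rfl

lemma eq_zero_of_dotProduct_eq_zero_of_span_eq_top {R ι κ : Type*} [CommRing R] [LinearOrder R]
    [IsStrictOrderedRing R] [Fintype κ] {v : ι → κ → R}
    (hv : Submodule.span R (Set.range v) = ⊤) {w : κ → R} (hw : ∀ i, w ⬝ᵥ v i = 0) :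
    w = 0 := by
  have hker : Submodule.span R (Set.range v) ≤ LinearMap.ker (dotProductBilin R R w) :=
    Submodule.span_le.2 (Set.range_subset_iff.2 hw)
  rw [hv, top_le_iff, LinearMap.ker_eq_top] at hker
  exact dotProduct_self_eq_zero.1 (LinearMap.congr_fun hker w)

section AffineEval

variable {ι : Type*} {m n : ℕ}

def affineEval (u : ι → Fin m → ℝ) :
    (Fin n → Fin m → ℝ) × (Fin n → ℝ) →ₗ[ℝ] ι → Fin n → ℝ where
  toFun Ab i j := matVec Ab.1 (u i) j + Ab.2 j
  map_add' x y := by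
    ext i j
    simp only [matVec, Prod.fst_add, Prod.snd_add, Pi.add_apply, add_mul,
      Finset.sum_add_distrib]
    ring
  map_smul' c x := by
    ext i j
    simp only [matVec, Prod.smul_fst, Prod.smul_snd, Pi.smul_apply, smul_eq_mul,
      RingHom.id_apply, mul_assoc, ← Finset.mul_sum, mul_add]

lemma affineEval_injective {u : ι → Fin m → ℝ}
    (hu : Submodule.span ℝ (Set.range fun i => (Fin.snoc (u i) 1 : Fin (m + 1) → ℝ)) = ⊤) :
    Function.Injective (affineEval (n := n) u) := by
  rw [← LinearMap.ker_eq_bot, LinearMap.ker_eq_bot']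
  rintro ⟨A, b⟩ hAb
  have hrow : ∀ j, (Fin.snoc (A j) (b j) : Fin (m + 1) → ℝ) = 0 := fun j =>
    eq_zero_of_dotProduct_eq_zero_of_span_eq_top hu fun i => by
      rw [← matVec_add_eq_snoc_dotProduct]
      exact congr_fun (congr_fun hAb i) j
  ext j k
  · simpa using congr_fun (hrow j) k.castSucc
  · simpa using congr_fun (hrow j) (Fin.last m)

end AffineEval

theorem bounded_uncertainty_set_general (m n : ℕ)
    (u : Fin (m + 1) → Fin m → ℝ) (F : Fin (m + 1) → Fin n → ℝ)
    (ε : Fin (m + 1) → ℝ)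
    (hli : LinearIndependent ℝ (fun i => (Fin.snoc (u i) 1 : Fin (m + 1) → ℝ))) :
    Bornology.IsBounded
      {Ab : (Fin n → Fin m → ℝ) × (Fin n → ℝ) |
        ∀ i, e2norm (fun j => matVec Ab.1 (u i) j + Ab.2 j - F i j) ≤ ε i} := by
  have hspan := hli.span_eq_top_of_card_eq_finrank (by simp)
  obtain ⟨K, -, hK⟩ := (affineEval (n := n) u).exists_antilipschitzWith
    (LinearMap.ker_eq_bot.2 (affineEval_injective hspan))
  refine (hK.isBounded_preimage
    (Metric.isBounded_Icc (fun i j => F i j - ε i) (fun i j => F i j + ε i))).subset ?_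
  intro Ab hAb
  have hclose : ∀ i j, |affineEval u Ab i j - F i j| ≤ ε i := fun i j =>
    (abs_le_e2norm _ j).trans (hAb i)
  exact ⟨fun i j => by linarith [(abs_le.1 (hclose i j)).1],
    fun i j => by linarith [(abs_le.1 (hclose i j)).2]⟩

/-- **Lemma 1 (Bounded Uncertainty Sets).** If the `m+1` vectors `(uᵢᵀ, 1)ᵀ ∈ ℝ^{m+1}`
are linearly independent, then the set of pairs `(A, b)` with
`‖A uᵢ + b − Fᵢ‖₂ ≤ εᵢ` for all `i` is bounded. -/
theorem bounded_uncertainty_set (m n : ℕ) (hm : 1 ≤ m) (hn : 1 ≤ n)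
    (u : Fin (m + 1) → Fin m → ℝ) (F : Fin (m + 1) → Fin n → ℝ)
    (ε : Fin (m + 1) → ℝ) (hε : ∀ i, 0 ≤ ε i)
    (hli : LinearIndependent ℝ (fun i => (Fin.snoc (u i) 1 : Fin (m + 1) → ℝ))) :
    Bornology.IsBounded
      {Ab : (Fin n → Fin m → ℝ) × (Fin n → ℝ) |
        ∀ i, e2norm (fun j => matVec Ab.1 (u i) j + Ab.2 j - F i j) ≤ ε i} :=
  bounded_uncertainty_set_general m n u F ε hli
end

section
/- (Weak duality in Theorem 1.) Let n, m, N ≥ 1, c ∈ ℝⁿ, u ∈ ℝᵐ, and for each i = 1, …, N let uᵢ ∈ ℝᵐ, Fᵢ ∈ ℝⁿ, εᵢ ≥ 0. Suppose λ₁, …, λ_N ∈ ℝⁿ satisfy ∑_{i=1}^N λᵢ uᵢᵀ = −c uᵀ (an equality of n×m matrices, where λᵢ uᵢᵀ denotes the outer product) and ∑_{i=1}^N λᵢ = −c. Then for every (A, b) ∈ ℝ^{n×m} × ℝⁿ satisfying ‖A uᵢ + b − Fᵢ‖₂ ≤ εᵢ for all i = 1, …, N, one has ⟨c, b + A u⟩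 ≤ −∑_{i=1}^N ( ⟨λᵢ, Fᵢ⟩ − ‖λᵢ‖₂ εᵢ ). -/
/-!
Pairing the multipliers with the points `A uᵢ + b` and summing, the dual constraints collapse
`∑ᵢ ⟨λᵢ, A uᵢ + b⟩` to `-⟨c, b + A u⟩`. Each pairing is at least `⟨λᵢ, Fᵢ⟩ - ‖λᵢ‖₂ εᵢ` by
Cauchy–Schwarz, since `A uᵢ + b` lies within `εᵢ` of `Fᵢ`.
-/

lemma e2norm_nonneg {n : ℕ} (v : Fin n → ℝ) : 0 ≤ e2norm v :=
  Real.sqrt_nonneg _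

lemma sum_mul_le_e2norm_mul_e2norm {n : ℕ} (v w : Fin n → ℝ) :
    ∑ j, v j * w j ≤ e2norm v * e2norm w :=
  Real.sum_mul_le_sqrt_mul_sqrt _ v w

lemma e2norm_neg {n : ℕ} (v : Fin n → ℝ) : e2norm (fun j => -v j) = e2norm v := by
  simp only [e2norm, neg_sq]

lemma sum_mul_sub_e2norm_mul_le_sum_mul {n : ℕ} {v F y : Fin n → ℝ} {ε : ℝ}
    (hy : e2norm (fun j => y j - F j) ≤ ε) :
    ∑ j, v j * F j - e2norm v * ε ≤ ∑ j, v j * y j := by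
  have hcs : ∑ j, -v j * (y j - F j) ≤ e2norm v * ε :=
    calc ∑ j, -v j * (y j - F j)
        ≤ e2norm (fun j => -v j) * e2norm (fun j => y j - F j) :=
          sum_mul_le_e2norm_mul_e2norm _ _
      _ ≤ e2norm v * ε := by
          rw [e2norm_neg]
          exact mul_le_mul_of_nonneg_left hy (e2norm_nonneg v)
  have hsplit : ∑ j, -v j * (y j - F j) = ∑ j, v j * F j - ∑ j, v j * y j := by
    rw [← Finset.sum_sub_distrib]
    exact Finset.sum_congr rfl fun j _ => by ring
  linarith

lemma sum_sum_mul_matVec_add {ι : Type*} [Fintype ι] {n m : ℕ} (lam : ι → Fin n → ℝ)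
    (us : ι → Fin m → ℝ) (A : Fin n → Fin m → ℝ) (b : Fin n → ℝ) :
    ∑ i, ∑ j, lam i j * (matVec A (us i) j + b j)
      = ∑ j, ∑ k, A j k * (∑ i, lam i j * us i k) + ∑ j, (∑ i, lam i j) * b j := by
  simp only [matVec, mul_add, Finset.sum_add_distrib, Finset.mul_sum, Finset.sum_mul]
  congr 1
  · rw [Finset.sum_comm]
    refine Finset.sum_congr rfl fun j _ => ?_
    rw [Finset.sum_comm]
    exact Finset.sum_congr rfl fun k _ => Finset.sum_congr rfl fun i _ => by ring
  · exact Finset.sum_comm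

lemma sum_mul_add_matVec_eq_neg_of_dual_feasible {ι : Type*} [Fintype ι] {n m : ℕ}
    {c : Fin n → ℝ} {u : Fin m → ℝ} {us : ι → Fin m → ℝ} {lam : ι → Fin n → ℝ}
    (houter : ∀ j k, ∑ i, lam i j * us i k = -(c j * u k))
    (hsum : ∀ j, ∑ i, lam i j = -c j) (A : Fin n → Fin m → ℝ) (b : Fin n → ℝ) :
    ∑ j, c j * (b j + matVec A u j) = -∑ i, ∑ j, lam i j * (matVec A (us i) j + b j) := by
  rw [sum_sum_mul_matVec_add, ← Finset.sum_add_distrib, ← Finset.sum_neg_distrib]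
  refine Finset.sum_congr rfl fun j _ => ?_
  simp only [houter, hsum, matVec, mul_add, Finset.mul_sum, mul_neg, neg_mul,
    Finset.sum_neg_distrib, neg_add, neg_neg]
  rw [add_comm]
  congr 1
  exact Finset.sum_congr rfl fun k _ => by ring

theorem weak_duality_robust_synthesis_general (n m N : ℕ)
    (c : Fin n → ℝ) (u : Fin m → ℝ)
    (us : Fin N → Fin m → ℝ) (F : Fin N → Fin n → ℝ) (ε : Fin N → ℝ)
    (lam : Fin N → Fin n → ℝ)
    (houter : ∀ j k, ∑ i, lam i j * us i k = -(c j * u k))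
    (hsum : ∀ j, ∑ i, lam i j = -c j)
    (A : Fin n → Fin m → ℝ) (b : Fin n → ℝ)
    (hAb : ∀ i, e2norm (fun j => matVec A (us i) j + b j - F i j) ≤ ε i) :
    (∑ j, c j * (b j + matVec A u j)) ≤
      -∑ i, ((∑ j, lam i j * F i j) - e2norm (lam i) * ε i) := by
  rw [sum_mul_add_matVec_eq_neg_of_dual_feasible houter hsum A b, neg_le_neg_iff]
  exact Finset.sum_le_sum fun i _ => sum_mul_sub_e2norm_mul_le_sum_mul (hAb i)

/-- **Weak duality in Theorem 1 (Robust Control Synthesis).**  If the multipliers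
`λ₁, …, λ_N ∈ ℝⁿ` satisfy `∑ᵢ λᵢ uᵢᵀ = −c uᵀ` (an equality of `n × m` matrices, stated
entrywise) and `∑ᵢ λᵢ = −c`, then for every `(A, b)` in the uncertainty set
(`‖A uᵢ + b − Fᵢ‖₂ ≤ εᵢ` for all `i`) one has
`⟨c, b + A u⟩ ≤ −∑ᵢ (⟨λᵢ, Fᵢ⟩ − ‖λᵢ‖₂ εᵢ)`. -/
theorem weak_duality_robust_synthesis (n m N : ℕ) (hn : 1 ≤ n) (hm : 1 ≤ m) (hN : 1 ≤ N)
    (c : Fin n → ℝ) (u : Fin m → ℝ)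
    (us : Fin N → Fin m → ℝ) (F : Fin N → Fin n → ℝ) (ε : Fin N → ℝ) (hε : ∀ i, 0 ≤ ε i)
    (lam : Fin N → Fin n → ℝ)
    (houter : ∀ j k, ∑ i, lam i j * us i k = -(c j * u k))
    (hsum : ∀ j, ∑ i, lam i j = -c j)
    (A : Fin n → Fin m → ℝ) (b : Fin n → ℝ)
    (hAb : ∀ i, e2norm (fun j => matVec A (us i) j + b j - F i j) ≤ ε i) :
    (∑ j, c j * (b j + matVec A u j)) ≤
      -∑ i, ((∑ j, lam i j * F i j) - e2norm (lam i) * ε i) :=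
  weak_duality_robust_synthesis_general n m N c u us F ε lam houter hsum A b hAb
end

section
/- (Sufficiency in Theorem 2.) Let m ≥ 1, let K ⊆ ℝᵐ × ℝ be a nonempty compact convex set, and let τ ∈ ℝ. Suppose that (0_m, q) ∉ K for every q ≥ τ. Then there exists u ∈ ℝᵐ such that q + ⟨p, u⟩ ≤ τ for all (p, q) ∈ K. -/
/-!
Strictly separate the compact convex set `K` from the closed convex ray `{0} × [τ, ∞)` by a
continuous linear functional `f (p, q) = g p + β q`; as `f` is bounded below on the ray, `β ≥ 0`.
If `β > 0`, dividing by `β` gives the constraint with `u` representing `β⁻¹ g`. If `β = 0`, then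
`g < a < 0` on `K`, so a large multiple of `g` pushes `q + t g p` below `τ`, because `q` is bounded
on the compact set `K`.
-/

open scoped RealInnerProductSpace
open Set

theorem nonneg_of_forall_le_imp_lt_mul {τ b β : ℝ} (h : ∀ q, τ ≤ q → b < q * β) : 0 ≤ β := by
  by_contra! hβ
  have hlt := h _ (le_max_left τ (b / β))
  have hle : max τ (b / β) * β ≤ b := by
    calc max τ (b / β) * β ≤ b / β * β := mul_le_mul_of_nonpos_right (le_max_right _ _) hβ.le
      _ = b := div_mul_cancel₀ b hβ.ne
  linarith

theorem ContinuousLinearMap.apply_mk_eq_add_mul {E : Type*} [AddCommGroup E] [Module ℝ E]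
    [TopologicalSpace E] (f : E × ℝ →L[ℝ] ℝ) (p : E) (q : ℝ) :
    f (p, q) = f (p, 0) + q * f (0, 1) := by
  have : (p, q) = (p, (0 : ℝ)) + q • ((0 : E), (1 : ℝ)) := by simp
  rw [this, map_add, map_smul, smul_eq_mul]

theorem IsCompact.exists_forall_snd_add_smul_le {E : Type*} [TopologicalSpace E]
    {K : Set (E × ℝ)} (hK : IsCompact K) (g : E → ℝ) {a : ℝ} (ha : a < 0) (hg : ∀ pq ∈ K, g pq.1 < a) (τ : ℝ) :
    ∃ t : ℝ, ∀ pq ∈ K, pq.2 + t * g pq.1 ≤ τ := by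
  obtain ⟨M, hM⟩ := hK.bddAbove_image continuous_snd.continuousOn
  set t := max 0 ((M - τ) / -a)
  have ht : M - τ ≤ t * -a := (div_le_iff₀ (neg_pos.mpr ha)).mp (le_max_right _ _)
  refine ⟨t, fun pq hpq => ?_⟩
  have hq : pq.2 ≤ M := hM (mem_image_of_mem _ hpq)
  have : t * g pq.1 ≤ t * a := mul_le_mul_of_nonneg_left (hg pq hpq).le (le_max_left _ _)
  linarith

section RaySeparation

variable {E : Type*} [AddCommGroup E] [Module ℝ E] [TopologicalSpace E] [T1Space E]
  [IsTopologicalAddGroup E] [ContinuousSMul ℝ E] [LocallyConvexSpace ℝ E]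

theorem exists_forall_snd_add_le_of_disjoint_ray {K : Set (E × ℝ)} (hcomp : IsCompact K)
    (hconv : Convex ℝ K) {τ : ℝ} (hdisj : Disjoint K ({0} ×ˢ Ici τ)) :
    ∃ φ : E →L[ℝ] ℝ, ∀ pq ∈ K, pq.2 + φ pq.1 ≤ τ := by
  obtain ⟨f, a, b, hfK, hab, hfray⟩ := geometric_hahn_banach_compact_closed hconv hcomp
    ((convex_singleton 0).prod (convex_Ici τ)) (isClosed_singleton.prod isClosed_Ici) hdisj
  set g := f.comp (ContinuousLinearMap.inl ℝ E ℝ)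
  set β := f (0, 1)
  have hf : ∀ pq ∈ K, g pq.1 + pq.2 * β < a := fun pq hpq => by
    simpa [g, β, ← f.apply_mk_eq_add_mul] using hfK pq hpq
  have hray : ∀ q, τ ≤ q → b < q * β := fun q hq => by
    simpa [β, f.apply_mk_eq_add_mul 0 q, ← Prod.zero_eq_mk] using hfray (0, q) ⟨rfl, hq⟩
  rcases (nonneg_of_forall_le_imp_lt_mul hray).lt_or_eq with hβ | hβ
  · refine ⟨β⁻¹ • g, fun pq hpq => ?_⟩
    have hlt : g pq.1 + pq.2 * β < τ * β := by linarith [hf pq hpq, hray τ le_rfl]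
    calc pq.2 + β⁻¹ * g pq.1 = β⁻¹ * (g pq.1 + pq.2 * β) := by field_simp; ring
      _ ≤ β⁻¹ * (τ * β) := by gcongr
      _ = τ := by field_simp
  · have ha : a < 0 := by linarith [hray τ le_rfl, hβ ▸ mul_zero τ]
    obtain ⟨t, ht⟩ := hcomp.exists_forall_snd_add_smul_le g ha
      (fun pq hpq => by simpa [← hβ] using hf pq hpq) τ
    exact ⟨t • g, ht⟩

end RaySeparation

theorem sufficiency_feasibility_general (m : ℕ)
    (K : Set (EuclideanSpace ℝ (Fin m) × ℝ))
    (hcomp : IsCompact K) (hconv : Convex ℝ K) (τ : ℝ)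
    (h : ∀ q : ℝ, τ ≤ q → ((0 : EuclideanSpace ℝ (Fin m)), q) ∉ K) :
    ∃ u : EuclideanSpace ℝ (Fin m),
      ∀ pq ∈ K, pq.2 + ⟪pq.1, u⟫ ≤ τ := by
  have hdisj : Disjoint K ({0} ×ˢ Ici τ) := by
    rw [disjoint_right]
    rintro ⟨p, q⟩ ⟨rfl, hq⟩
    exact h q hq
  obtain ⟨φ, hφ⟩ := exists_forall_snd_add_le_of_disjoint_ray hcomp hconv hdisj
  refine ⟨(InnerProductSpace.toDual ℝ _).symm φ, fun pq hpq => ?_⟩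
  rw [real_inner_comm, InnerProductSpace.toDual_symm_apply]
  exact hφ pq hpq

/-- **Sufficiency in Theorem 2 (Feasibility of Data-Driven Robust Controller).**
If the nonempty compact convex set `K ⊆ ℝᵐ × ℝ` avoids the vertical ray
`{0_m} × [τ, ∞)`, then some input `u ∈ ℝᵐ` satisfies the robust constraint
`q + ⟨p, u⟩ ≤ τ` for all `(p, q) ∈ K`. -/
theorem sufficiency_feasibility (m : ℕ) (hm : 1 ≤ m)
    (K : Set (EuclideanSpace ℝ (Fin m) × ℝ))
    (hne : K.Nonempty) (hcomp : IsCompact K) (hconv : Convex ℝ K) (τ : ℝ)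
    (h : ∀ q : ℝ, τ ≤ q → ((0 : EuclideanSpace ℝ (Fin m)), q) ∉ K) :
    ∃ u : EuclideanSpace ℝ (Fin m),
      ∀ pq ∈ K, pq.2 + ⟪pq.1, u⟫ ≤ τ :=
  sufficiency_feasibility_general m K hcomp hconv τ h
end

section
/- Let n, m, N ≥ 1. Let f, f̂ : ℝⁿ → ℝⁿ and g, ĝ : ℝⁿ → ℝ^{n×m}, and set f̃ = f − f̂ and g̃ = g − ĝ. Assume f̃ is Lipschitz with constant L_f ≥ 0 and g̃ is Lipschitz with constant L_g ≥ 0 (with ℝ^{n×m} carrying the operator norm induced by Euclidean norms). Let (x₁, u₁), …, (x_N, u_N) ∈ ℝⁿ × ℝᵐ be data points, and for each i set Fᵢ = f̃(xᵢ) + g̃(xᵢ) uᵢ. Fix x ∈ ℝⁿ, c ∈ ℝⁿ, τ ∈ ℝ, and u ∈ ℝᵐ, and for each i set εᵢ(x) = (L_f + L_g ‖uᵢ‖₂) ‖x − xᵢ‖₂. If ⟨c, f̂(x) + ĝ(x) u + b + A u⟩ ≤ τ holds for every (A, b) ∈ ℝ^{n×m} × ℝⁿ satisfying ‖A uᵢ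 + b − Fᵢ‖₂ ≤ εᵢ(x) for all i = 1, …, N, then ⟨c, f(x) + g(x) u⟩ ≤ τ. -/
/-! The true model-error pair `(g̃(x), f̃(x))` lies in the data-driven uncertainty set: for each
data point, `g̃(x)uᵢ + f̃(x) − Fᵢ = (f̃(x) − f̃(xᵢ)) + (g̃(x) − g̃(xᵢ))uᵢ`, whose norm the two Lipschitz
bounds control by `εᵢ(x)`. Instantiating the robust constraint at this pair gives the certificate
constraint for the true dynamics `f = f̂ + f̃`, `g = ĝ + g̃`. -/

open scoped RealInnerProductSpace

section ResidualBound

variable {𝕜 F G : Type*} [NontriviallyNormedField 𝕜] [SeminormedAddCommGroup F]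
  [NormedSpace 𝕜 F] [SeminormedAddCommGroup G] [NormedSpace 𝕜 G]

theorem norm_apply_add_sub_add_apply_le {a a' : F} {T T' : G →L[𝕜] F} {Lf Lg r : ℝ}
    (ha : ‖a - a'‖ ≤ Lf * r) (hT : ‖T - T'‖ ≤ Lg * r) (v : G) :
    ‖T v + a - (a' + T' v)‖ ≤ (Lf + Lg * ‖v‖) * r :=
  calc ‖T v + a - (a' + T' v)‖ = ‖(a - a') + (T - T') v‖ := by
        rw [sub_apply]; congr 1; abel
    _ ≤ ‖a - a'‖ + ‖T - T'‖ * ‖v‖ := norm_add_le_of_le le_rfl ((T - T').le_opNorm v)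
    _ ≤ Lf * r + Lg * r * ‖v‖ := by gcongr
    _ = (Lf + Lg * ‖v‖) * r := by ring

end ResidualBound

theorem robust_controller_soundness_general (n m N : ℕ)
    (f fhat : EuclideanSpace ℝ (Fin n) → EuclideanSpace ℝ (Fin n))
    (g ghat : EuclideanSpace ℝ (Fin n) → (EuclideanSpace ℝ (Fin m) →L[ℝ] EuclideanSpace ℝ (Fin n)))
    (Lf Lg : ℝ)
    (hf : ∀ x y : EuclideanSpace ℝ (Fin n),
      ‖(f x - fhat x) - (f y - fhat y)‖ ≤ Lf * ‖x - y‖)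
    (hg : ∀ x y : EuclideanSpace ℝ (Fin n),
      ‖(g x - ghat x) - (g y - ghat y)‖ ≤ Lg * ‖x - y‖)
    (xs : Fin N → EuclideanSpace ℝ (Fin n)) (us : Fin N → EuclideanSpace ℝ (Fin m))
    (x : EuclideanSpace ℝ (Fin n)) (c : EuclideanSpace ℝ (Fin n)) (τ : ℝ)
    (u : EuclideanSpace ℝ (Fin m))
    (hrob : ∀ (A : EuclideanSpace ℝ (Fin m) →L[ℝ] EuclideanSpace ℝ (Fin n))
        (b : EuclideanSpace ℝ (Fin n)),
      (∀ i, ‖A (us i) + b -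
          ((f (xs i) - fhat (xs i)) + (g (xs i) - ghat (xs i)) (us i))‖ ≤
        (Lf + Lg * ‖us i‖) * ‖x - xs i‖) →
      ⟪c, fhat x + ghat x u + b + A u⟫ ≤ τ) :
    ⟪c, f x + g x u⟫ ≤ τ := by
  have hmem : ∀ i, ‖(g x - ghat x) (us i) + (f x - fhat x) -
      ((f (xs i) - fhat (xs i)) + (g (xs i) - ghat (xs i)) (us i))‖ ≤
      (Lf + Lg * ‖us i‖) * ‖x - xs i‖ := fun i =>
    norm_apply_add_sub_add_apply_le (hf x (xs i)) (hg x (xs i)) (us i)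
  have htrue : fhat x + ghat x u + (f x - fhat x) + (g x - ghat x) u = f x + g x u := by
    rw [sub_apply]; abel
  simpa only [htrue] using hrob _ _ hmem

/-- **Soundness of the DR-CCF-OP controller (Section III).**  With `f̃ = f − f̂`,
`g̃ = g − ĝ` Lipschitz (matrices `ℝ^{n×m}` carrying the operator norm induced by the
Euclidean norms, modelled as continuous linear maps), residuals
`Fᵢ = f̃(xᵢ) + g̃(xᵢ)uᵢ`, and `εᵢ(x) = (L_f + L_g‖uᵢ‖₂)‖x − xᵢ‖₂`:
if `⟨c, f̂(x) + ĝ(x)u + b + Au⟩ ≤ τ` holds for every `(A, b)` with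
`‖Auᵢ + b − Fᵢ‖₂ ≤ εᵢ(x)` for all `i`, then `⟨c, f(x) + g(x)u⟩ ≤ τ`. -/
theorem robust_controller_soundness (n m N : ℕ) (hn : 1 ≤ n) (hm : 1 ≤ m) (hN : 1 ≤ N)
    (f fhat : EuclideanSpace ℝ (Fin n) → EuclideanSpace ℝ (Fin n))
    (g ghat : EuclideanSpace ℝ (Fin n) → (EuclideanSpace ℝ (Fin m) →L[ℝ] EuclideanSpace ℝ (Fin n)))
    (Lf Lg : ℝ) (hLf : 0 ≤ Lf) (hLg : 0 ≤ Lg)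
    (hf : ∀ x y : EuclideanSpace ℝ (Fin n),
      ‖(f x - fhat x) - (f y - fhat y)‖ ≤ Lf * ‖x - y‖)
    (hg : ∀ x y : EuclideanSpace ℝ (Fin n),
      ‖(g x - ghat x) - (g y - ghat y)‖ ≤ Lg * ‖x - y‖)
    (xs : Fin N → EuclideanSpace ℝ (Fin n)) (us : Fin N → EuclideanSpace ℝ (Fin m))
    (x : EuclideanSpace ℝ (Fin n)) (c : EuclideanSpace ℝ (Fin n)) (τ : ℝ)
    (u : EuclideanSpace ℝ (Fin m))
    (hrob : ∀ (A : EuclideanSpace ℝ (Fin m) →L[ℝ] EuclideanSpace ℝ (Fin n))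
        (b : EuclideanSpace ℝ (Fin n)),
      (∀ i, ‖A (us i) + b -
          ((f (xs i) - fhat (xs i)) + (g (xs i) - ghat (xs i)) (us i))‖ ≤
        (Lf + Lg * ‖us i‖) * ‖x - xs i‖) →
      ⟪c, fhat x + ghat x u + b + A u⟫ ≤ τ) :
    ⟪c, f x + g x u⟫ ≤ τ :=
  robust_controller_soundness_general n m N f fhat g ghat Lf Lg hf hg xs us x c τ u hrob
end
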